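/- Let d ≥ 1, let (A, d_A) be a Polish metric space with base point a_0, and let F be a Lipschitz function, with Lipschitz constant L_F, from the d×d real matrices (with Frobenius norm) to ℝ^d. For a probability measure ν on ℝ^d × A whose marginal ν̂ on ℝ^d has finite second moment, define Cov(ν) := ∫ z z^T ν̂(dz) − (∫ z ν̂(dz)) (∫ z ν̂(dz))^T, and set h(ν) := F(Cov(ν)). Let r ≥ 4 and q ≥ 2. Then there exists L ≥ 0, depending only on L_F and d, such that for every ρ ∈ P_r(ℝ^d × A) and all ν_1, ν_2 ∈ P_q(ℝ^d × A) absolutely continuous with respect to ρ with respective densities φ_1, φ_2 ∈ L²(ρ): |h(ν_1) − h(ν_2)| ≤ L (∫ |φ_1 − φ_2|² dρ)^{1/2} (1 + ‖ρ‖_{W_r}² + ‖ν_1‖_{W_q}² + ‖ν_2‖_{W_q}²). -/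

import Mathlib

open MeasureTheory

/-- The covariance matrix of the first marginal (on `ℝ^d`) of a measure on `ℝ^d × A`:
`Cov(ν) = ∫ z zᵀ dν̂ − (∫ z dν̂)(∫ z dν̂)ᵀ`, where `ν̂` is the marginal of `ν` on `ℝ^d`. -/
noncomputable def covMatrix {d : ℕ} {A : Type*} [MeasurableSpace A]
    (ν : Measure (EuclideanSpace ℝ (Fin d) × A)) : Matrix (Fin d) (Fin d) ℝ :=
  Matrix.of fun i j =>
    (∫ x, x i * x j ∂(ν.map Prod.fst))
      - (∫ x, x i ∂(ν.map Prod.fst)) * (∫ x, x j ∂(ν.map Prod.fst))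

/-!
Each entry of `Cov(ν)` is `∫ xᵢ xⱼ dν − (∫ xᵢ dν)(∫ xⱼ dν)`. For `ν = φ ρ`, a difference
`∫ f dν₁ − ∫ f dν₂ = ∫ f (φ₁ − φ₂) dρ` is at most `‖f‖_{L²(ρ)} ‖φ₁ − φ₂‖_{L²(ρ)}` by
Cauchy–Schwarz, and `|xᵢ xⱼ|, |xᵢ|` are dominated by `w²`, `w` for the weight
`w(y, a) = |y| + d_A(a, a₀)`; since `r ≥ 4`, Lyapunov's inequality gives
`‖w²‖_{L²(ρ)} ≤ ‖ρ‖²_{W_r}` and `‖w‖_{L²(ρ)} ≤ ‖ρ‖_{W_r}`, while `|∫ xᵢ dνₖ| ≤ ‖νₖ‖_{W_q}`.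
Expanding the product of means and using `2ab ≤ a² + b²` bounds every entry of
`Cov(ν₁) − Cov(ν₂)` by `2 D (1 + ‖ρ‖²_{W_r} + ‖ν₁‖²_{W_q} + ‖ν₂‖²_{W_q})` with
`D = ‖φ₁ − φ₂‖_{L²(ρ)}`, so its Frobenius norm is at most `d` times that, and `L = 2 d |L_F|`.
-/

lemma Real.rpow_le_one_add_rpow {x s t : ℝ} (hx : 0 ≤ x) (hs : 0 ≤ s) (hst : s ≤ t) :
    x ^ s ≤ 1 + x ^ t := by
  rcases le_or_gt x 1 with hx1 | hx1
  · linarith [Real.rpow_le_one hx hx1 hs, Real.rpow_nonneg hx t]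
  · linarith [Real.rpow_le_rpow_of_exponent_le hx1.le hst]

lemma sq_le_rpow_of_abs_le_pow {x y : ℝ} {n : ℕ} (h : |x| ≤ y ^ n) :
    x ^ 2 ≤ y ^ ((2 * n : ℕ) : ℝ) := by
  rw [Real.rpow_natCast, pow_mul', ← sq_abs]
  exact pow_le_pow_left₀ (abs_nonneg x) h 2

section Moments

variable {α : Type*} [MeasurableSpace α] {μ : Measure α} {f g G : α → ℝ} {n : ℕ} {r s t : ℝ}

lemma MeasureTheory.Integrable.rpow_of_le [IsFiniteMeasure μ] (hg0 : ∀ x, 0 ≤ g x)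
    (hg : AEStronglyMeasurable g μ) (hs : 0 ≤ s) (hst : s ≤ t)
    (ht : Integrable (fun x => g x ^ t) μ) : Integrable (fun x => g x ^ s) μ :=
  ((integrable_const 1).add ht).mono' (hg.aemeasurable.pow_const s).aestronglyMeasurable
    (.of_forall fun x => by
      rw [Real.norm_of_nonneg (Real.rpow_nonneg (hg0 x) s)]
      exact Real.rpow_le_one_add_rpow (hg0 x) hs hst)

/-- Lyapunov's inequality, via Jensen for the convex map `y ↦ y ^ (t / s)`. -/
lemma integral_rpow_le_rpow_integral_rpow [IsProbabilityMeasure μ] (hg0 : ∀ x, 0 ≤ g x)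
    (hg : AEStronglyMeasurable g μ) (hs : 0 < s) (hst : s ≤ t)
    (ht : Integrable (fun x => g x ^ t) μ) :
    ∫ x, g x ^ s ∂μ ≤ (∫ x, g x ^ t ∂μ) ^ (s / t) := by
  have hts : 1 ≤ t / s := (one_le_div hs).2 hst
  have hpow : ∀ x, (g x ^ s) ^ (t / s) = g x ^ t := fun x => by
    rw [← Real.rpow_mul (hg0 x), mul_div_cancel₀ t hs.ne']
  have jensen : (∫ x, g x ^ s ∂μ) ^ (t / s) ≤ ∫ x, g x ^ t ∂μ := by
    have := (convexOn_rpow hts).map_integral_le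
      (Real.continuous_rpow_const (by linarith)).continuousOn isClosed_Ici
      (.of_forall fun x => Set.mem_Ici.2 (Real.rpow_nonneg (hg0 x) s))
      (ht.rpow_of_le hg0 hg hs.le hst) (by simpa [Function.comp_def, hpow] using ht)
    simpa only [hpow] using this
  have hI0 : 0 ≤ ∫ x, g x ^ s ∂μ := integral_nonneg fun x => Real.rpow_nonneg (hg0 x) s
  calc ∫ x, g x ^ s ∂μ = ((∫ x, g x ^ s ∂μ) ^ (t / s)) ^ (s / t) := by
        rw [← Real.rpow_mul hI0, div_mul_div_cancel₀ hs.ne', div_self (hs.trans_le hst).ne',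
          Real.rpow_one]
    _ ≤ (∫ x, g x ^ t ∂μ) ^ (s / t) := by
        gcongr
        exact div_nonneg hs.le (hs.le.trans hst)

lemma abs_integral_mul_le_L2_mul_L2 (hf : MemLp f 2 μ) (hg : MemLp g 2 μ) :
    |∫ x, f x * g x ∂μ| ≤ (∫ x, f x ^ 2 ∂μ) ^ ((1:ℝ) / 2) * (∫ x, g x ^ 2 ∂μ) ^ ((1:ℝ) / 2) := by
  have hsq : ∀ u : α → ℝ, ∫ x, ‖u x‖ ^ (2:ℝ) ∂μ = ∫ x, u x ^ 2 ∂μ := fun u => by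
    simp only [Real.rpow_two, Real.norm_eq_abs, sq_abs]
  calc |∫ x, f x * g x ∂μ| ≤ ∫ x, ‖f x‖ * ‖g x‖ ∂μ := by
        simpa only [← Real.norm_eq_abs, ← norm_mul] using
          norm_integral_le_integral_norm (fun x => f x * g x)
    _ ≤ (∫ x, ‖f x‖ ^ (2:ℝ) ∂μ) ^ (1 / (2:ℝ)) * (∫ x, ‖g x‖ ^ (2:ℝ) ∂μ) ^ (1 / (2:ℝ)) :=
        integral_mul_norm_le_Lp_mul_Lq .two_two (by simpa using hf) (by simpa using hg)
    _ = _ := by rw [hsq f, hsq g]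

lemma integral_withDensity_ofReal {φ : α → ℝ} (hφ : Measurable φ)
    (hφ0 : ∀ x, 0 ≤ φ x) (f : α → ℝ) :
    ∫ x, f x ∂(μ.withDensity fun x => ENNReal.ofReal (φ x)) = ∫ x, φ x * f x ∂μ := by
  rw [integral_withDensity_eq_integral_toReal_smul hφ.ennreal_ofReal
    (.of_forall fun _ => ENNReal.ofReal_lt_top)]
  simp only [ENNReal.toReal_ofReal (hφ0 _), smul_eq_mul]

lemma abs_integral_withDensity_sub_le {φ₁ φ₂ : α → ℝ}
    (hφ₁ : Measurable φ₁) (hφ₂ : Measurable φ₂) (hφ₁0 : ∀ x, 0 ≤ φ₁ x) (hφ₂0 : ∀ x, 0 ≤ φ₂ x)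
    (hφ₁2 : MemLp φ₁ 2 μ) (hφ₂2 : MemLp φ₂ 2 μ) (hf : MemLp f 2 μ) :
    |∫ x, f x ∂(μ.withDensity fun x => ENNReal.ofReal (φ₁ x))
        - ∫ x, f x ∂(μ.withDensity fun x => ENNReal.ofReal (φ₂ x))|
      ≤ (∫ x, f x ^ 2 ∂μ) ^ ((1:ℝ) / 2) * (∫ x, (φ₁ x - φ₂ x) ^ 2 ∂μ) ^ ((1:ℝ) / 2) := by
  have hφ₁f : Integrable (fun x => φ₁ x * f x) μ := hφ₁2.integrable_mul hf
  have hφ₂f : Integrable (fun x => φ₂ x * f x) μ := hφ₂2.integrable_mul hf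
  rw [integral_withDensity_ofReal hφ₁ hφ₁0, integral_withDensity_ofReal hφ₂ hφ₂0,
    ← integral_sub hφ₁f hφ₂f]
  simpa only [← sub_mul, mul_comm (f _), Pi.sub_apply] using
    abs_integral_mul_le_L2_mul_L2 hf (hφ₁2.sub hφ₂2)

lemma integrable_sq_of_abs_le_pow [IsProbabilityMeasure μ] (hG0 : ∀ x, 0 ≤ G x)
    (hG : AEStronglyMeasurable G μ) (hf : AEStronglyMeasurable f μ) (hfG : ∀ x, |f x| ≤ G x ^ n)
    (hnr : 2 * n ≤ r) (hr : Integrable (fun x => G x ^ r) μ) :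
    Integrable (fun x => f x ^ 2) μ :=
  (hr.rpow_of_le hG0 hG (Nat.cast_nonneg _) (by exact_mod_cast hnr)).mono' (hf.pow 2)
    (.of_forall fun x => by
      rw [Real.norm_of_nonneg (sq_nonneg _)]
      exact sq_le_rpow_of_abs_le_pow (hfG x))

lemma integral_sq_rpow_le_of_abs_le_pow [IsProbabilityMeasure μ] (hG0 : ∀ x, 0 ≤ G x)
    (hG : AEStronglyMeasurable G μ) (hfG : ∀ x, |f x| ≤ G x ^ n) (hn : 0 < n) (hnr : 2 * n ≤ r)
    (hr : Integrable (fun x => G x ^ r) μ) :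
    (∫ x, f x ^ 2 ∂μ) ^ ((1:ℝ) / 2) ≤ ((∫ x, G x ^ r ∂μ) ^ (1 / r)) ^ n := by
  have hnr' : ((2 * n : ℕ) : ℝ) ≤ r := by exact_mod_cast hnr
  have h2n : (0:ℝ) < (2 * n : ℕ) := by positivity
  have hI0 : 0 ≤ ∫ x, G x ^ r ∂μ := integral_nonneg fun x => Real.rpow_nonneg (hG0 x) r
  have hsq : ∫ x, f x ^ 2 ∂μ ≤ (∫ x, G x ^ r ∂μ) ^ (((2 * n : ℕ) : ℝ) / r) :=
    (integral_mono_of_nonneg (.of_forall fun x => sq_nonneg (f x))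
      (hr.rpow_of_le hG0 hG h2n.le hnr')
      (.of_forall fun x => sq_le_rpow_of_abs_le_pow (hfG x))).trans
    (integral_rpow_le_rpow_integral_rpow hG0 hG h2n hnr' hr)
  calc (∫ x, f x ^ 2 ∂μ) ^ ((1:ℝ) / 2)
      ≤ ((∫ x, G x ^ r ∂μ) ^ (((2 * n : ℕ) : ℝ) / r)) ^ ((1:ℝ) / 2) := by
        gcongr
    _ = ((∫ x, G x ^ r ∂μ) ^ (1 / r)) ^ n := by
        rw [← Real.rpow_mul hI0, ← Real.rpow_natCast, ← Real.rpow_mul hI0]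
        congr 1
        push_cast
        ring

lemma abs_integral_withDensity_sub_le_of_abs_le_pow [IsProbabilityMeasure μ] {φ₁ φ₂ : α → ℝ}
    (hG0 : ∀ x, 0 ≤ G x) (hG : AEStronglyMeasurable G μ) (hf : AEStronglyMeasurable f μ)
    (hfG : ∀ x, |f x| ≤ G x ^ n) (hn : 0 < n) (hnr : 2 * n ≤ r)
    (hr : Integrable (fun x => G x ^ r) μ)
    (hφ₁ : Measurable φ₁) (hφ₂ : Measurable φ₂) (hφ₁0 : ∀ x, 0 ≤ φ₁ x) (hφ₂0 : ∀ x, 0 ≤ φ₂ x)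
    (hφ₁2 : MemLp φ₁ 2 μ) (hφ₂2 : MemLp φ₂ 2 μ) :
    |∫ x, f x ∂(μ.withDensity fun x => ENNReal.ofReal (φ₁ x))
        - ∫ x, f x ∂(μ.withDensity fun x => ENNReal.ofReal (φ₂ x))|
      ≤ ((∫ x, G x ^ r ∂μ) ^ (1 / r)) ^ n * (∫ x, (φ₁ x - φ₂ x) ^ 2 ∂μ) ^ ((1:ℝ) / 2) := by
  have hf2 : MemLp f 2 μ :=
    (memLp_two_iff_integrable_sq hf).2 (integrable_sq_of_abs_le_pow hG0 hG hf hfG hnr hr)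
  refine (abs_integral_withDensity_sub_le hφ₁ hφ₂ hφ₁0 hφ₂0 hφ₁2 hφ₂2 hf2).trans ?_
  gcongr
  exact integral_sq_rpow_le_of_abs_le_pow hG0 hG hfG hn hnr hr

lemma abs_integral_le_rpow_integral_rpow [IsProbabilityMeasure μ] {q : ℝ} (hG0 : ∀ x, 0 ≤ G x)
    (hG : AEStronglyMeasurable G μ) (hfG : ∀ x, |f x| ≤ G x) (hq : 1 ≤ q)
    (hint : Integrable (fun x => G x ^ q) μ) :
    |∫ x, f x ∂μ| ≤ (∫ x, G x ^ q ∂μ) ^ (1 / q) := by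
  have hG1 : Integrable G μ := by
    simpa only [Real.rpow_one] using hint.rpow_of_le hG0 hG zero_le_one hq
  calc |∫ x, f x ∂μ| ≤ ∫ x, G x ∂μ := norm_integral_le_of_norm_le (f := f) hG1 (.of_forall hfG)
    _ ≤ (∫ x, G x ^ q ∂μ) ^ (1 / q) := by
        simpa only [Real.rpow_one] using
          integral_rpow_le_rpow_integral_rpow hG0 hG zero_lt_one hq hint

end Moments

lemma abs_sub_mul_sub_sub_mul_le (m₁ m₂ a₁ a₂ b₁ b₂ : ℝ) :
    |(m₁ - a₁ * b₁) - (m₂ - a₂ * b₂)| ≤ |m₁ - m₂| + |a₁ - a₂| * |b₁| + |a₂| * |b₁ - b₂| := by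
  calc |(m₁ - a₁ * b₁) - (m₂ - a₂ * b₂)| = |(m₁ - m₂) - (a₁ - a₂) * b₁ - a₂ * (b₁ - b₂)| := by
        ring_nf
    _ ≤ |m₁ - m₂| + |(a₁ - a₂) * b₁| + |a₂ * (b₁ - b₂)| :=
        (abs_sub _ _).trans (by gcongr; exact abs_sub _ _)
    _ = _ := by rw [abs_mul, abs_mul]

lemma sqrt_sum_sum_sq_le_of_abs_le {ι : Type*} [Fintype ι] {M : ι → ι → ℝ} {c : ℝ} (hc : 0 ≤ c)
    (hM : ∀ i j, |M i j| ≤ c) : √(∑ i, ∑ j, M i j ^ 2) ≤ Fintype.card ι * c := by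
  rw [Real.sqrt_le_left (by positivity)]
  calc ∑ i, ∑ j, M i j ^ 2 ≤ ∑ _i : ι, ∑ _j : ι, c ^ 2 :=
        Finset.sum_le_sum fun i _ => Finset.sum_le_sum fun j _ => sq_le_sq' (abs_le.1 (hM i j)).1
          (abs_le.1 (hM i j)).2
    _ = (Fintype.card ι * c) ^ 2 := by
        rw [Finset.sum_const, Finset.sum_const, Finset.card_univ, nsmul_eq_mul, nsmul_eq_mul]
        ring

section Covariance

variable {d : ℕ} {A : Type*} [MeasurableSpace A]

lemma covMatrix_apply (ν : Measure (EuclideanSpace ℝ (Fin d) × A)) (i j : Fin d) :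
    covMatrix ν i j
      = ∫ z, z.1 i * z.1 j ∂ν - (∫ z, z.1 i ∂ν) * ∫ z, z.1 j ∂ν := by
  have hproj : ∀ k : Fin d, Continuous fun x : EuclideanSpace ℝ (Fin d) => x k :=
    fun k => (EuclideanSpace.proj k).continuous
  simp only [covMatrix, Matrix.of_apply]
  rw [integral_map (f := fun x : EuclideanSpace ℝ (Fin d) => x i * x j)
      measurable_fst.aemeasurable ((hproj i).mul (hproj j)).aestronglyMeasurable,
    integral_map measurable_fst.aemeasurable (hproj i).aestronglyMeasurable,
    integral_map measurable_fst.aemeasurable (hproj j).aestronglyMeasurable]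

lemma abs_covMatrix_sub_le {ν₁ ν₂ : Measure (EuclideanSpace ℝ (Fin d) × A)} {X Y₁ Y₂ D : ℝ}
    (hX : 0 ≤ X) (hD : 0 ≤ D)
    (hm : ∀ i j, |∫ z, z.1 i * z.1 j ∂ν₁ - ∫ z, z.1 i * z.1 j ∂ν₂| ≤ X ^ 2 * D)
    (ha : ∀ i, |∫ z, z.1 i ∂ν₁ - ∫ z, z.1 i ∂ν₂| ≤ X * D)
    (hY₁ : ∀ i, |∫ z, z.1 i ∂ν₁| ≤ Y₁) (hY₂ : ∀ i, |∫ z, z.1 i ∂ν₂| ≤ Y₂) (i j : Fin d) :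
    |covMatrix ν₁ i j - covMatrix ν₂ i j| ≤ 2 * D * (1 + X ^ 2 + Y₁ ^ 2 + Y₂ ^ 2) := by
  rw [covMatrix_apply, covMatrix_apply]
  refine (abs_sub_mul_sub_sub_mul_le ..).trans ?_
  have h₁ : |∫ z, z.1 i ∂ν₁ - ∫ z, z.1 i ∂ν₂| * |∫ z, z.1 j ∂ν₁| ≤ X * D * Y₁ :=
    mul_le_mul (ha i) (hY₁ j) (abs_nonneg _) (mul_nonneg hX hD)
  have h₂ : |∫ z, z.1 i ∂ν₂| * |∫ z, z.1 j ∂ν₁ - ∫ z, z.1 j ∂ν₂| ≤ Y₂ * (X * D) :=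
    mul_le_mul (hY₂ i) (ha j) (abs_nonneg _) ((abs_nonneg _).trans (hY₂ i))
  linarith [hm i j, mul_nonneg hD (sq_nonneg (X - Y₁)), mul_nonneg hD (sq_nonneg (X - Y₂)),
    mul_nonneg hD (sq_nonneg Y₁), mul_nonneg hD (sq_nonneg Y₂)]

lemma abs_covMatrix_withDensity_sub_le {ρ : Measure (EuclideanSpace ℝ (Fin d) × A)}
    [IsProbabilityMeasure ρ] {G φ₁ φ₂ : EuclideanSpace ℝ (Fin d) × A → ℝ} {r q : ℝ}
    [IsProbabilityMeasure (ρ.withDensity fun z => ENNReal.ofReal (φ₁ z))]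
    [IsProbabilityMeasure (ρ.withDensity fun z => ENNReal.ofReal (φ₂ z))]
    (hG0 : ∀ z, 0 ≤ G z) (hG : Measurable G) (hcoord : ∀ i z, |z.1 i| ≤ G z)
    (hr : 4 ≤ r) (hq : 1 ≤ q) (hρ : Integrable (fun z => G z ^ r) ρ)
    (hφ₁ : Measurable φ₁) (hφ₂ : Measurable φ₂) (hφ₁0 : ∀ z, 0 ≤ φ₁ z) (hφ₂0 : ∀ z, 0 ≤ φ₂ z)
    (hφ₁2 : MemLp φ₁ 2 ρ) (hφ₂2 : MemLp φ₂ 2 ρ)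
    (hν₁ : Integrable (fun z => G z ^ q) (ρ.withDensity fun z => ENNReal.ofReal (φ₁ z)))
    (hν₂ : Integrable (fun z => G z ^ q) (ρ.withDensity fun z => ENNReal.ofReal (φ₂ z)))
    (i j : Fin d) :
    |covMatrix (ρ.withDensity fun z => ENNReal.ofReal (φ₁ z)) i j
        - covMatrix (ρ.withDensity fun z => ENNReal.ofReal (φ₂ z)) i j|
      ≤ 2 * (∫ z, (φ₁ z - φ₂ z) ^ 2 ∂ρ) ^ ((1:ℝ) / 2)
        * (1 + ((∫ z, G z ^ r ∂ρ) ^ (1 / r)) ^ 2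
          + ((∫ z, G z ^ q ∂(ρ.withDensity fun z => ENNReal.ofReal (φ₁ z))) ^ (1 / q)) ^ 2
          + ((∫ z, G z ^ q ∂(ρ.withDensity fun z => ENNReal.ofReal (φ₂ z))) ^ (1 / q)) ^ 2) := by
  have hproj : ∀ i : Fin d, Measurable fun z : EuclideanSpace ℝ (Fin d) × A => z.1 i :=
    fun i => (EuclideanSpace.proj i).continuous.measurable.comp measurable_fst
  have hX : 0 ≤ (∫ z, G z ^ r ∂ρ) ^ (1 / r) :=
    Real.rpow_nonneg (integral_nonneg fun z => Real.rpow_nonneg (hG0 z) r) _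
  have hD : 0 ≤ (∫ z, (φ₁ z - φ₂ z) ^ 2 ∂ρ) ^ ((1:ℝ) / 2) :=
    Real.rpow_nonneg (integral_nonneg fun z => sq_nonneg _) _
  have hsecond := fun i j => abs_integral_withDensity_sub_le_of_abs_le_pow (n := 2)
    (f := fun z => z.1 i * z.1 j) hG0 hG.aestronglyMeasurable
    ((hproj i).mul (hproj j)).aestronglyMeasurable
    (fun z => by
      rw [abs_mul, sq]
      exact mul_le_mul (hcoord i z) (hcoord j z) (abs_nonneg _) (hG0 z))
    two_pos (by norm_num; linarith) hρ hφ₁ hφ₂ hφ₁0 hφ₂0 hφ₁2 hφ₂2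
  have hmean := fun i => abs_integral_withDensity_sub_le_of_abs_le_pow (n := 1)
    (f := fun z => z.1 i) hG0 hG.aestronglyMeasurable (hproj i).aestronglyMeasurable
    (fun z => by rw [pow_one]; exact hcoord i z)
    one_pos (by norm_num; linarith) hρ hφ₁ hφ₂ hφ₁0 hφ₂0 hφ₁2 hφ₂2
  simp only [pow_one] at hmean
  exact abs_covMatrix_sub_le hX hD hsecond hmean
    (fun i => abs_integral_le_rpow_integral_rpow hG0 hG.aestronglyMeasurable (hcoord i) hq hν₁)
    (fun i => abs_integral_le_rpow_integral_rpow hG0 hG.aestronglyMeasurable (hcoord i) hq hν₂) i j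

end Covariance

theorem stmt12_general
    {d : ℕ}
    {A : Type*} [MetricSpace A]
    [MeasurableSpace A] [BorelSpace A] (a₀ : A)
    (F : Matrix (Fin d) (Fin d) ℝ → EuclideanSpace ℝ (Fin d)) (LF : ℝ)
    (hF : ∀ M M' : Matrix (Fin d) (Fin d) ℝ,
      ‖F M - F M'‖ ≤ LF * Real.sqrt (∑ i, ∑ j, (M i j - M' i j) ^ 2))
    {r q : ℝ} (hr : 4 ≤ r) (hq : 2 ≤ q) :
    ∃ L : ℝ, 0 ≤ L ∧
      ∀ ρ : Measure (EuclideanSpace ℝ (Fin d) × A), IsProbabilityMeasure ρ →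
        Integrable (fun z => (‖z.1‖ + dist z.2 a₀) ^ r) ρ →
        ∀ φ₁ φ₂ : EuclideanSpace ℝ (Fin d) × A → ℝ,
          Measurable φ₁ → Measurable φ₂ → (∀ z, 0 ≤ φ₁ z) → (∀ z, 0 ≤ φ₂ z) →
          MemLp φ₁ 2 ρ → MemLp φ₂ 2 ρ →
          ∀ ν₁ ν₂ : Measure (EuclideanSpace ℝ (Fin d) × A),
            IsProbabilityMeasure ν₁ → IsProbabilityMeasure ν₂ →
            ν₁ = ρ.withDensity (fun z => ENNReal.ofReal (φ₁ z)) →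
            ν₂ = ρ.withDensity (fun z => ENNReal.ofReal (φ₂ z)) →
            Integrable (fun z => (‖z.1‖ + dist z.2 a₀) ^ q) ν₁ →
            Integrable (fun z => (‖z.1‖ + dist z.2 a₀) ^ q) ν₂ →
            ‖F (covMatrix ν₁) - F (covMatrix ν₂)‖
              ≤ L * (∫ z, (φ₁ z - φ₂ z) ^ 2 ∂ρ) ^ ((1:ℝ) / 2)
                * (1 + ((∫ z, (‖z.1‖ + dist z.2 a₀) ^ r ∂ρ) ^ (1 / r)) ^ 2
                   + ((∫ z, (‖z.1‖ + dist z.2 a₀) ^ q ∂ν₁) ^ (1 / q)) ^ 2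
                   + ((∫ z, (‖z.1‖ + dist z.2 a₀) ^ q ∂ν₂) ^ (1 / q)) ^ 2) := by
  refine ⟨2 * d * |LF|, by positivity, ?_⟩
  intro ρ _ hρ φ₁ φ₂ hφ₁ hφ₂ hφ₁0 hφ₂0 hφ₁2 hφ₂2 ν₁ ν₂ _ _ rfl rfl hν₁ hν₂
  have hentry := abs_covMatrix_withDensity_sub_le (G := fun z => ‖z.1‖ + dist z.2 a₀)
    (fun z => by positivity)
    (continuous_fst.norm.add (continuous_snd.dist continuous_const)).measurable
    (fun i z => (PiLp.norm_apply_le z.1 i).trans (le_add_of_nonneg_right dist_nonneg))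
    hr (by linarith) hρ hφ₁ hφ₂ hφ₁0 hφ₂0 hφ₁2 hφ₂2 hν₁ hν₂
  calc _ ≤ |LF| * √(∑ i, ∑ j, (covMatrix _ i j - covMatrix _ i j) ^ 2) :=
        (hF _ _).trans (by gcongr; exact le_abs_self LF)
    _ ≤ |LF| * (d * _) := by
        gcongr
        simpa only [Fintype.card_fin] using sqrt_sum_sum_sq_le_of_abs_le (by positivity) hentry
    _ = _ := by ring

/-- If `h(ν) = F(Cov(ν))` with `F` Lipschitz from the `d×d` matrices with the
Frobenius norm to `ℝ^d`, then for `r ≥ 4`, `q ≥ 2` there is `L ≥ 0` such that for every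
`ρ ∈ P_r(ℝ^d × A)` and all `ν₁, ν₂ ∈ P_q(ℝ^d × A)` absolutely continuous with respect to `ρ`
with densities `φ₁, φ₂ ∈ L²(ρ)`:
`|h(ν₁) − h(ν₂)| ≤ L (∫|φ₁－φ₂|²dρ)^{1/2} (1 + ‖ρ‖_{W_r}² + ‖ν₁‖_{W_q}² + ‖ν₂‖_{W_q}²)`. -/
theorem stmt12
    {d : ℕ} (hd : 1 ≤ d)
    {A : Type*} [MetricSpace A] [TopologicalSpace.SeparableSpace A] [CompleteSpace A]
    [MeasurableSpace A] [BorelSpace A] (a₀ : A)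
    (F : Matrix (Fin d) (Fin d) ℝ → EuclideanSpace ℝ (Fin d)) (LF : ℝ)
    (hF : ∀ M M' : Matrix (Fin d) (Fin d) ℝ,
      ‖F M - F M'‖ ≤ LF * Real.sqrt (∑ i, ∑ j, (M i j - M' i j) ^ 2))
    {r q : ℝ} (hr : 4 ≤ r) (hq : 2 ≤ q) :
    ∃ L : ℝ, 0 ≤ L ∧
      ∀ ρ : Measure (EuclideanSpace ℝ (Fin d) × A), IsProbabilityMeasure ρ →
        Integrable (fun z => (‖z.1‖ + dist z.2 a₀) ^ r) ρ →
        ∀ φ₁ φ₂ : EuclideanSpace ℝ (Fin d) × A → ℝ,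
          Measurable φ₁ → Measurable φ₂ → (∀ z, 0 ≤ φ₁ z) → (∀ z, 0 ≤ φ₂ z) →
          MemLp φ₁ 2 ρ → MemLp φ₂ 2 ρ →
          ∀ ν₁ ν₂ : Measure (EuclideanSpace ℝ (Fin d) × A),
            IsProbabilityMeasure ν₁ → IsProbabilityMeasure ν₂ →
            ν₁ = ρ.withDensity (fun z => ENNReal.ofReal (φ₁ z)) →
            ν₂ = ρ.withDensity (fun z => ENNReal.ofReal (φ₂ z)) →
            Integrable (fun z => (‖z.1‖ + dist z.2 a₀) ^ q) ν₁ →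
            Integrable (fun z => (‖z.1‖ + dist z.2 a₀) ^ q) ν₂ →
            ‖F (covMatrix ν₁) - F (covMatrix ν₂)‖
              ≤ L * (∫ z, (φ₁ z - φ₂ z) ^ 2 ∂ρ) ^ ((1:ℝ) / 2)
                * (1 + ((∫ z, (‖z.1‖ + dist z.2 a₀) ^ r ∂ρ) ^ (1 / r)) ^ 2
                   + ((∫ z, (‖z.1‖ + dist z.2 a₀) ^ q ∂ν₁) ^ (1 / q)) ^ 2
                   + ((∫ z, (‖z.1‖ + dist z.2 a₀) ^ q ∂ν₂) ^ (1 / q)) ^ 2) :=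
  stmt12_general a₀ F LF hF hr hq
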